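/- arXiv:2410.18946 — 2 statements merged into one kernel-verified Lean document; each statement's English description precedes it below -/
import Mathlib

section
/- For the zero-set extension cutoff, if v ∈ C^{n+1}([-1,1]) with v^{(k)}(y₀)=0 for 0 ≤ k ≤ n-1, and vₑ(y) = v(y)·χ((y-y₀)/ε) with χ a smooth cutoff vanishing on [-1,1] and ≡1 outside [-2,2], then ‖∂ᵧⁱ(v - vₑ)‖_{L^∞(-1,1)} ≤ C ε^{n-i} for all 0 ≤ i ≤ n-1, where C depends on ‖v‖_{C^{n+1}}, n, and χ. -/
open Set

private lemma aux_choose_le_two_pow (i j : ℕ) : i.choose j ≤ 2 ^ i := by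
  by_cases h : j ≤ i
  · calc i.choose j ≤ ∑ k ∈ Finset.range (i + 1), i.choose k :=
        Finset.single_le_sum (fun _ _ => Nat.zero_le _) (Finset.mem_range.mpr (by omega))
      _ = 2 ^ i := Nat.sum_range_choose i
  · rw [Nat.choose_eq_zero_of_lt (by omega)]; exact Nat.zero_le _

private lemma aux_iteratedDeriv_zero_fun (k : ℕ) :
    iteratedDeriv k (fun _ : ℝ => (0 : ℝ)) = fun _ => (0 : ℝ) := by
  induction k with
  | zero => simp
  | succ k IH =>
    rw [iteratedDeriv_succ', show deriv (fun _ : ℝ => (0 : ℝ)) = fun _ => (0 : ℝ) from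
      funext fun x => deriv_const x 0, IH]

/-- iterated derivative within `Icc (-1) 1` at an interior point equals the global one. -/
private lemma aux_within_eq (f : ℝ → ℝ) (k : ℕ) (y : ℝ) (hy : y ∈ Set.Ioo (-1:ℝ) 1) :
    iteratedDerivWithin k f (Set.Icc (-1:ℝ) 1) y = iteratedDeriv k f y := by
  have h1 : iteratedFDerivWithin ℝ k f (Set.Icc (-1:ℝ) 1 ∩ Set.Ioo (-1:ℝ) 1) y
      = iteratedFDerivWithin ℝ k f (Set.Icc (-1:ℝ) 1) y :=
    iteratedFDerivWithin_inter (isOpen_Ioo.mem_nhds hy)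
  rw [Set.inter_eq_right.mpr Set.Ioo_subset_Icc_self] at h1
  rw [iteratedDerivWithin_eq_iteratedFDerivWithin, iteratedDeriv_eq_iteratedFDeriv, ← h1,
    iteratedFDerivWithin_of_isOpen k isOpen_Ioo hy]

private lemma aux_scale (ψ : ℝ → ℝ) (hψ : ContDiff ℝ (⊤ : ℕ∞) ψ) (y₀ ε : ℝ) (hε : ε ≠ 0) (k : ℕ)
    (y : ℝ) :
    iteratedDeriv k (fun z => ψ ((z - y₀) / ε)) y
      = (ε⁻¹) ^ k * iteratedDeriv k ψ ((y - y₀) / ε) := by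
  have hφ : ContDiff ℝ (k : ℕ) (fun w : ℝ => ψ (w + (-y₀ / ε))) :=
    (hψ.of_le (by exact_mod_cast le_top)).comp (contDiff_id.add contDiff_const)
  have h1 : (fun z : ℝ => ψ ((z - y₀) / ε)) = fun z => (fun w => ψ (w + (-y₀ / ε))) (ε⁻¹ * z) := by
    funext z; congr 1; field_simp; ring
  rw [h1, iteratedDeriv_comp_const_mul hφ ε⁻¹, iteratedDeriv_comp_add_const k ψ (-y₀ / ε)]
  congr 1
  ring

private lemma aux_cutoff_bound (ψ : ℝ → ℝ) (hψ : ContDiff ℝ (⊤ : ℕ∞) ψ)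
    (h0 : ∀ η : ℝ, 2 ≤ |η| → ψ η = 0) (n : ℕ) :
    ∃ B : ℝ, 1 ≤ B ∧ ∀ k ≤ n, ∀ η : ℝ, |iteratedDeriv k ψ η| ≤ B := by
  have hbk : ∀ k : ℕ, ∃ Bk : ℝ, ∀ η : ℝ, |iteratedDeriv k ψ η| ≤ Bk := by
    intro k
    obtain ⟨Bk, hBk⟩ := (isCompact_Icc : IsCompact (Set.Icc (-3:ℝ) 3)).exists_bound_of_continuousOn
      ((hψ.continuous_iteratedDeriv k (by exact_mod_cast le_top)).continuousOn)
    refine ⟨max Bk 0, fun η => ?_⟩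
    by_cases hη : η ∈ Set.Icc (-3:ℝ) 3
    · exact le_trans (by rw [← Real.norm_eq_abs]; exact hBk η hη) (le_max_left _ _)
    · have hη3 : 3 < |η| :=
        not_le.mp fun h => hη (by rw [Set.mem_Icc]; exact abs_le.mp h)
      have hzero : iteratedDeriv k ψ η = 0 := by
        have hop : IsOpen {w : ℝ | 2 < |w|} := isOpen_lt continuous_const continuous_abs
        have hev : ψ =ᶠ[nhds η] (fun _ => (0:ℝ)) := by
          filter_upwards [hop.mem_nhds (show (2:ℝ) < |η| by linarith)] with w hw
          exact h0 w (le_of_lt hw)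
        rw [Filter.EventuallyEq.iteratedDeriv_eq k hev, aux_iteratedDeriv_zero_fun]
      rw [hzero, abs_zero]; exact le_max_right _ _
  choose Bk hBk using hbk
  have hsum0 : (0:ℝ) ≤ ∑ k ∈ Finset.range (n + 1), max (Bk k) 0 :=
    Finset.sum_nonneg fun _ _ => le_max_right _ _
  refine ⟨1 + ∑ k ∈ Finset.range (n + 1), max (Bk k) 0, by linarith, ?_⟩
  intro k hk η
  calc |iteratedDeriv k ψ η| ≤ Bk k := hBk k η
    _ ≤ max (Bk k) 0 := le_max_left _ _
    _ ≤ ∑ j ∈ Finset.range (n + 1), max (Bk j) 0 :=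
        Finset.single_le_sum (fun j _ => le_max_right (Bk j) 0)
          (Finset.mem_range.mpr (by omega))
    _ ≤ 1 + ∑ j ∈ Finset.range (n + 1), max (Bk j) 0 := by linarith

/-- Taylor-type bound: vanishing derivatives at `y₀` give polynomial decay. -/
private lemma aux_taylor (n : ℕ) (v : ℝ → ℝ) (M : ℝ) (y₀ : ℝ)
    (hy₀ : y₀ ∈ Set.Icc (-1:ℝ) 1)
    (hv : ContDiffOn ℝ (n + 1 : ℕ) v (Set.Icc (-1:ℝ) 1))
    (hvan : ∀ k < n, iteratedDerivWithin k v (Set.Icc (-1:ℝ) 1) y₀ = 0)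
    (hM0 : 0 ≤ M)
    (hM : ∀ y ∈ Set.Icc (-1:ℝ) 1, |iteratedDerivWithin n v (Set.Icc (-1:ℝ) 1) y| ≤ M) :
    ∀ m, m ≤ n → ∀ y ∈ Set.Icc (-1:ℝ) 1,
      |iteratedDerivWithin (n - m) v (Set.Icc (-1:ℝ) 1) y| ≤ M * |y - y₀| ^ m := by
  have hI : UniqueDiffOn ℝ (Set.Icc (-1:ℝ) 1) := uniqueDiffOn_Icc (by norm_num)
  intro m
  induction m with
  | zero => intro _ y hy; simpa using hM y hy
  | succ m IH =>
    intro hm y hy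
    have hmn : m ≤ n := by omega
    have hk : n - (m + 1) < n := by omega
    have hk1 : n - (m + 1) + 1 = n - m := by omega
    by_cases hyy : y = y₀
    · subst hyy
      simp [hvan _ hk, sub_self]
    · set s := Set.uIcc y₀ y with hs
      have h11 : Set.Icc (-1:ℝ) 1 = Set.uIcc (-1:ℝ) 1 := (Set.uIcc_of_le (by norm_num)).symm
      have hsub : s ⊆ Set.Icc (-1:ℝ) 1 := by
        rw [h11]; exact Set.uIcc_subset_uIcc (h11 ▸ hy₀) (h11 ▸ hy)
      have hmin : min y₀ y < max y₀ y := min_lt_max.mpr fun h => hyy h.symm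
      have huds : UniqueDiffOn ℝ s := by rw [hs, Set.uIcc]; exact uniqueDiffOn_Icc hmin
      have hdiff : DifferentiableOn ℝ
          (iteratedDerivWithin (n - (m + 1)) v (Set.Icc (-1:ℝ) 1)) (Set.Icc (-1:ℝ) 1) :=
        hv.differentiableOn_iteratedDerivWithin
          (by exact_mod_cast (by omega : n - (m + 1) < n + 1)) hI
      have hbound : ∀ x ∈ s,
          ‖derivWithin (iteratedDerivWithin (n - (m + 1)) v (Set.Icc (-1:ℝ) 1)) s x‖
            ≤ M * |y - y₀| ^ m := by
        intro x hx
        have hxI : x ∈ Set.Icc (-1:ℝ) 1 := hsub hx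
        rw [derivWithin_subset hsub (huds x hx) (hdiff x hxI),
          ← iteratedDerivWithin_succ, hk1, Real.norm_eq_abs]
        have hxb : |x - y₀| ≤ |y - y₀| := by
          rcases Set.mem_uIcc.mp hx with ⟨h1, h2⟩ | ⟨h1, h2⟩
          · rw [abs_of_nonneg (by linarith), abs_of_nonneg (by linarith)]; linarith
          · rw [abs_of_nonpos (by linarith), abs_of_nonpos (by linarith)]; linarith
        calc |iteratedDerivWithin (n - m) v (Set.Icc (-1:ℝ) 1) x| ≤ M * |x - y₀| ^ m :=
              IH hmn x hxI
          _ ≤ M * |y - y₀| ^ m :=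
              mul_le_mul_of_nonneg_left (pow_le_pow_left₀ (abs_nonneg _) hxb m) hM0
      have hest := Convex.norm_image_sub_le_of_norm_derivWithin_le (hdiff.mono hsub) hbound
        (convex_uIcc y₀ y) (Set.left_mem_uIcc (a := y₀) (b := y)) (Set.right_mem_uIcc (a := y₀) (b := y))
      have h0 : iteratedDerivWithin (n - (m + 1)) v (Set.Icc (-1:ℝ) 1) y₀ = 0 := hvan _ hk
      calc |iteratedDerivWithin (n - (m + 1)) v (Set.Icc (-1:ℝ) 1) y|
          = ‖iteratedDerivWithin (n - (m + 1)) v (Set.Icc (-1:ℝ) 1) y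
              - iteratedDerivWithin (n - (m + 1)) v (Set.Icc (-1:ℝ) 1) y₀‖ := by
            rw [h0, sub_zero, Real.norm_eq_abs]
        _ ≤ (M * |y - y₀| ^ m) * ‖y - y₀‖ := hest
        _ = M * |y - y₀| ^ (m + 1) := by rw [Real.norm_eq_abs, pow_succ]; ring

/-- If v ∈ C^{n+1}([-1,1]) with v^{(k)}(y₀) = 0 for 0 ≤ k ≤ n-1, and
vₑ(y) = v(y) χ((y-y₀)/ε) with χ a smooth cutoff vanishing on [-1,1] and ≡ 1 outside
[-2,2], then ‖∂ᵧⁱ(v - vₑ)‖_{L^∞(-1,1)} ≤ C ε^{n-i} for all 0 ≤ i ≤ n-1. -/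
theorem stmt8 (n : ℕ) (hn : 1 ≤ n) (v : ℝ → ℝ)
    (hv : ContDiffOn ℝ (n + 1 : ℕ) v (Set.Icc (-1:ℝ) 1))
    (y₀ : ℝ) (hy₀ : y₀ ∈ Set.Ioo (-1:ℝ) 1)
    (hvan : ∀ k ≤ n - 1, iteratedDerivWithin k v (Set.Icc (-1:ℝ) 1) y₀ = 0)
    (χ : ℝ → ℝ) (hχ : ContDiff ℝ (⊤ : ℕ∞) χ)
    (hχ0 : ∀ η : ℝ, |η| ≤ 1 → χ η = 0) (hχ1 : ∀ η : ℝ, 2 ≤ |η| → χ η = 1) :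
    ∃ C > 0, ∀ ε : ℝ, 0 < ε → y₀ - 2 * ε ∈ Set.Ioo (-1:ℝ) 1 → y₀ + 2 * ε ∈ Set.Ioo (-1:ℝ) 1 →
      ∀ i ≤ n - 1, ∀ y ∈ Set.Ioo (-1:ℝ) 1,
        |iteratedDerivWithin i (fun z : ℝ => v z - v z * χ ((z - y₀) / ε))
            (Set.Icc (-1:ℝ) 1) y| ≤ C * ε ^ (n - i) := by
  have hI : UniqueDiffOn ℝ (Set.Icc (-1:ℝ) 1) := uniqueDiffOn_Icc (by norm_num)
  have hy₀I : y₀ ∈ Set.Icc (-1:ℝ) 1 := Set.Ioo_subset_Icc_self hy₀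
  set ψ : ℝ → ℝ := fun w => 1 - χ w with hψdef
  have hψ : ContDiff ℝ (⊤ : ℕ∞) ψ := contDiff_const.sub hχ
  have hψ0 : ∀ η : ℝ, 2 ≤ |η| → ψ η = 0 := fun η hη => by simp [hψdef, hχ1 η hη]
  obtain ⟨B, hB1, hB⟩ := aux_cutoff_bound ψ hψ hψ0 n
  have hB0 : (0:ℝ) ≤ B := by linarith
  obtain ⟨M, hM⟩ := (isCompact_Icc : IsCompact (Set.Icc (-1:ℝ) 1)).exists_bound_of_continuousOn
    (hv.continuousOn_iteratedDerivWithin (by exact_mod_cast Nat.le_succ n) hI)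
  have hM' : ∀ y ∈ Set.Icc (-1:ℝ) 1,
      |iteratedDerivWithin n v (Set.Icc (-1:ℝ) 1) y| ≤ M := fun y hy => by
    rw [← Real.norm_eq_abs]; exact hM y hy
  have hM0 : 0 ≤ M := le_trans (abs_nonneg _) (hM' y₀ hy₀I)
  have htay := aux_taylor n v M y₀ hy₀I hv (fun k hk => hvan k (by omega)) hM0 hM'
  set K : ℝ := (2:ℝ) ^ n * 2 ^ n * M * B with hK
  have hK0 : 0 ≤ K :=
    mul_nonneg (mul_nonneg (mul_nonneg (by positivity) (by positivity)) hM0) hB0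
  have hC0 : (0:ℝ) < (n + 1) * K + 1 := by
    have : (0:ℝ) ≤ (n + 1) * K := mul_nonneg (by positivity) hK0
    linarith
  refine ⟨(n + 1) * K + 1, hC0, ?_⟩
  intro ε hε _ _ i hi y hy
  have hyI : y ∈ Set.Icc (-1:ℝ) 1 := Set.Ioo_subset_Icc_self hy
  have hin : i < n := by omega
  have hfun : (fun z : ℝ => v z - v z * χ ((z - y₀) / ε))
      = fun z => v z * ψ ((z - y₀) / ε) := by
    funext z; simp only [hψdef]; ring
  rw [hfun]
  have hεpow : 0 < ε ^ (n - i) := pow_pos hε _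
  by_cases hcase : |y - y₀| ≤ 2 * ε
  · -- near the singular point
    have hgsm : ContDiffOn ℝ ((n + 1 : ℕ)) (fun z : ℝ => ψ ((z - y₀) / ε))
        (Set.Icc (-1:ℝ) 1) :=
      ((hψ.of_le (by exact_mod_cast le_top)).comp ((contDiff_id.sub contDiff_const).div_const ε)).contDiffOn
    have key := norm_iteratedFDerivWithin_mul_le (𝕜 := ℝ) hv hgsm hI hyI
      (n := i) (by exact_mod_cast (by omega : i ≤ n + 1))
    rw [← Real.norm_eq_abs, ← norm_iteratedFDerivWithin_eq_norm_iteratedDerivWithin]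
    refine le_trans key ?_
    have hterm : ∀ j ∈ Finset.range (i + 1),
        (i.choose j : ℝ) * ‖iteratedFDerivWithin ℝ j v (Set.Icc (-1:ℝ) 1) y‖ *
          ‖iteratedFDerivWithin ℝ (i - j) (fun z : ℝ => ψ ((z - y₀) / ε))
            (Set.Icc (-1:ℝ) 1) y‖ ≤ K * ε ^ (n - i) := by
      intro j hj
      have hji : j ≤ i := by have := Finset.mem_range.mp hj; omega
      have hvj : ‖iteratedFDerivWithin ℝ j v (Set.Icc (-1:ℝ) 1) y‖ ≤ M * (2 * ε) ^ (n - j) := by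
        rw [norm_iteratedFDerivWithin_eq_norm_iteratedDerivWithin, Real.norm_eq_abs]
        have h1 := htay (n - j) (by omega) y hyI
        rw [show n - (n - j) = j from by omega] at h1
        refine h1.trans ?_
        exact mul_le_mul_of_nonneg_left (pow_le_pow_left₀ (abs_nonneg _) hcase _) hM0
      have hgj : ‖iteratedFDerivWithin ℝ (i - j) (fun z : ℝ => ψ ((z - y₀) / ε))
          (Set.Icc (-1:ℝ) 1) y‖ ≤ (ε⁻¹) ^ (i - j) * B := by
        rw [norm_iteratedFDerivWithin_eq_norm_iteratedDerivWithin, Real.norm_eq_abs,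
          aux_within_eq _ _ _ hy, aux_scale ψ hψ y₀ ε (ne_of_gt hε), abs_mul, abs_pow,
          abs_inv, abs_of_pos hε]
        exact mul_le_mul_of_nonneg_left (hB _ (by omega) _)
          (pow_nonneg (inv_nonneg.mpr hε.le) _)
      calc (i.choose j : ℝ) * ‖iteratedFDerivWithin ℝ j v (Set.Icc (-1:ℝ) 1) y‖ *
            ‖iteratedFDerivWithin ℝ (i - j) (fun z : ℝ => ψ ((z - y₀) / ε))
              (Set.Icc (-1:ℝ) 1) y‖
          ≤ (i.choose j : ℝ) * (M * (2 * ε) ^ (n - j)) * ((ε⁻¹) ^ (i - j) * B) := by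
            have h1 : (0:ℝ) ≤ (i.choose j : ℝ) := by positivity
            have h2 : (0:ℝ) ≤ (i.choose j : ℝ) * (M * (2 * ε) ^ (n - j)) := by
              apply mul_nonneg h1; positivity
            exact mul_le_mul (mul_le_mul_of_nonneg_left hvj h1) hgj (norm_nonneg _) h2
        _ ≤ K * ε ^ (n - i) := by
            have hc : ε ^ (i - j) * (ε⁻¹) ^ (i - j) = 1 := by
              rw [← mul_pow, mul_inv_cancel₀ (ne_of_gt hε), one_pow]
            have hch : (i.choose j : ℝ) ≤ 2 ^ n := by
              exact_mod_cast le_trans (aux_choose_le_two_pow i j)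
                (Nat.pow_le_pow_right (by norm_num) hin.le)
            have h2j : (2:ℝ) ^ (n - j) ≤ 2 ^ n :=
              pow_le_pow_right₀ (by norm_num) (by omega)
            have heq : (i.choose j : ℝ) * (M * (2 * ε) ^ (n - j)) * ((ε⁻¹) ^ (i - j) * B)
                = ((i.choose j : ℝ) * 2 ^ (n - j) * M * B) * ε ^ (n - i)
                  * (ε ^ (i - j) * (ε⁻¹) ^ (i - j)) := by
              rw [mul_pow, show n - j = (n - i) + (i - j) from by omega, pow_add]; ring
            rw [heq, hc, mul_one, hK]
            refine mul_le_mul_of_nonneg_right ?_ hεpow.le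
            apply mul_le_mul_of_nonneg_right _ hB0
            apply mul_le_mul_of_nonneg_right _ hM0
            exact mul_le_mul hch h2j (by positivity) (by positivity)
    calc ∑ j ∈ Finset.range (i + 1),
          (i.choose j : ℝ) * ‖iteratedFDerivWithin ℝ j v (Set.Icc (-1:ℝ) 1) y‖ *
            ‖iteratedFDerivWithin ℝ (i - j) (fun z : ℝ => ψ ((z - y₀) / ε))
              (Set.Icc (-1:ℝ) 1) y‖
        ≤ ∑ _j ∈ Finset.range (i + 1), K * ε ^ (n - i) := Finset.sum_le_sum hterm
      _ = ((i : ℝ) + 1) * (K * ε ^ (n - i)) := by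
          rw [Finset.sum_const, Finset.card_range, nsmul_eq_mul]; push_cast; ring
      _ ≤ ((n + 1) * K + 1) * ε ^ (n - i) := by
          have hii : (i : ℝ) + 1 ≤ (n : ℝ) + 1 := by
            have : (i : ℝ) ≤ (n : ℝ) := by exact_mod_cast hin.le
            linarith
          have h1 : ((i : ℝ) + 1) * K ≤ ((n : ℝ) + 1) * K + 1 := by nlinarith
          calc ((i : ℝ) + 1) * (K * ε ^ (n - i)) = (((i : ℝ) + 1) * K) * ε ^ (n - i) := by ring
            _ ≤ (((n : ℝ) + 1) * K + 1) * ε ^ (n - i) :=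
                mul_le_mul_of_nonneg_right h1 hεpow.le
  · -- away from the singular point: everything vanishes
    have hzero : iteratedDerivWithin i (fun z : ℝ => v z * ψ ((z - y₀) / ε))
        (Set.Icc (-1:ℝ) 1) y = 0 := by
      rw [aux_within_eq _ _ _ hy]
      have hop : IsOpen {z : ℝ | 2 * ε < |z - y₀|} :=
        isOpen_lt continuous_const ((continuous_id.sub continuous_const).abs)
      have hev : (fun z : ℝ => v z * ψ ((z - y₀) / ε)) =ᶠ[nhds y] (fun _ => (0:ℝ)) := by
        filter_upwards [hop.mem_nhds (not_le.mp hcase)] with z hz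
        have h2 : (2:ℝ) ≤ |(z - y₀) / ε| := by
          rw [abs_div, abs_of_pos hε, le_div_iff₀ hε]
          have : 2 * ε < |z - y₀| := hz
          linarith
        rw [hψ0 _ h2, mul_zero]
      rw [Filter.EventuallyEq.iteratedDeriv_eq i hev, aux_iteratedDeriv_zero_fun]
    rw [hzero, abs_zero]
    exact le_of_lt (mul_pos hC0 hεpow)
end

section
/- Local C¹ regularity of the vorticity function: let ψ ∈ C³ on a planar domain, set ω = Δψ, and suppose {ψ, ω} = ∇^⊥ψ·∇ω = 0. Let q be a point with ∇ψ(q) ≠ 0 and ψ(q) = c. Then there exist δ₁, δ₂ > 0 and a C¹ function f on (c - δ₁, c + δ₂) such that ω = f(ψ) in a neighborhood of q; explicitly f(c') = Δψ(σ(g⁻¹(c'))) where σ is the gradient flow of ψ through q and g = ψ ∘ σ. -/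
/-!
Near a regular point `q₀` the map `Φ = (ψ, ℓ)`, with `ℓ` a linear form independent of `dψ(q₀)`,
is a local C¹ diffeomorphism. In the plane, `{ψ, ω} = 0` says that `∇ω` is parallel to `∇ψ`
wherever `∇ψ ≠ 0`, so `dω` vanishes on the tangent lines of the level sets of `ψ`; hence
`ω ∘ Φ⁻¹` is constant in its second variable on a small square, and `f(x) = ω(Φ⁻¹(x, s₀))` is
C¹ with `ω = f ∘ ψ` near `q₀`. Along the gradient flow `σ` through `q₀` one has
`(ψ ∘ σ)' = |∇ψ(σ)|² > 0`, so `ψ ∘ σ` is a strictly increasing parametrisation of the values of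
`ψ` near `c`, and `f = ω ∘ σ ∘ (ψ ∘ σ)⁻¹` there.
-/

open Set Filter Topology

namespace ContinuousLinearMap

variable (L M : ℝ × ℝ →L[ℝ] ℝ)

theorem apply_eq_fst_mul_add_snd_mul (v : ℝ × ℝ) : L v = v.1 * L (1, 0) + v.2 * L (0, 1) := by
  conv_lhs => rw [show v = v.1 • ((1 : ℝ), (0 : ℝ)) + v.2 • ((0 : ℝ), (1 : ℝ)) by ext <;> simp]
  rw [map_add, map_smul, map_smul, smul_eq_mul, smul_eq_mul]

theorem sq_add_sq_pos_of_ne_zero (hL : L ≠ 0) : 0 < L (1, 0) ^ 2 + L (0, 1) ^ 2 := by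
  by_contra! h
  have h₁ : L (1, 0) = 0 := by nlinarith [sq_nonneg (L (1, 0)), sq_nonneg (L (0, 1))]
  have h₂ : L (0, 1) = 0 := by nlinarith [sq_nonneg (L (1, 0)), sq_nonneg (L (0, 1))]
  exact hL (ext fun v => by simp [apply_eq_fst_mul_add_snd_mul L v, h₁, h₂])

theorem apply_eq_zero_of_cross_eq_zero (hL : L ≠ 0)
    (hLM : -L (0, 1) * M (1, 0) + L (1, 0) * M (0, 1) = 0) {v : ℝ × ℝ} (hv : L v = 0) :
    M v = 0 := by
  rw [apply_eq_fst_mul_add_snd_mul] at hv ⊢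
  have key : (L (1, 0) ^ 2 + L (0, 1) ^ 2) * (v.1 * M (1, 0) + v.2 * M (0, 1)) = 0 := by
    linear_combination (L (1, 0) * M (1, 0) + L (0, 1) * M (0, 1)) * hv +
      (L (1, 0) * v.2 - L (0, 1) * v.1) * hLM
  exact (mul_eq_zero.mp key).resolve_left (sq_add_sq_pos_of_ne_zero L hL).ne'

theorem exists_isInvertible_prod (hL : L ≠ 0) : ∃ l : ℝ × ℝ →L[ℝ] ℝ, (L.prod l).IsInvertible := by
  set l : ℝ × ℝ →L[ℝ] ℝ := L (1, 0) • snd ℝ ℝ ℝ - L (0, 1) • fst ℝ ℝ ℝ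
  have hinj : Function.Injective (L.prod l : ℝ × ℝ →ₗ[ℝ] ℝ × ℝ) := by
    refine (injective_iff_map_eq_zero _).mpr fun v hv => ?_
    have h₁ : L v = 0 := congrArg Prod.fst hv
    have h₂ : L (1, 0) * v.2 - L (0, 1) * v.1 = 0 := by simpa [l] using congrArg Prod.snd hv
    rw [apply_eq_fst_mul_add_snd_mul] at h₁
    have hpos := sq_add_sq_pos_of_ne_zero L hL
    have hv₁ : (L (1, 0) ^ 2 + L (0, 1) ^ 2) * v.1 = 0 := by
      linear_combination L (1, 0) * h₁ - L (0, 1) * h₂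
    have hv₂ : (L (1, 0) ^ 2 + L (0, 1) ^ 2) * v.2 = 0 := by
      linear_combination L (0, 1) * h₁ + L (1, 0) * h₂
    exact Prod.ext ((mul_eq_zero.mp hv₁).resolve_left hpos.ne')
      ((mul_eq_zero.mp hv₂).resolve_left hpos.ne')
  exact ⟨l, (LinearEquiv.ofInjectiveEndo _ hinj).toContinuousLinearEquiv, rfl⟩

end ContinuousLinearMap

theorem hasDerivAt_comp_eq_zero_of_ker_le {E : Type*} [NormedAddCommGroup E] [NormedSpace ℝ E]
    {ψ ω : E → ℝ} {γ : ℝ → E} {γ' : E} {t c : ℝ} (hγ : HasDerivAt γ γ' t)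
    (hψ : DifferentiableAt ℝ ψ (γ t)) (hω : DifferentiableAt ℝ ω (γ t))
    (hlevel : ∀ᶠ s in 𝓝 t, ψ (γ s) = c)
    (hker : ∀ v, fderiv ℝ ψ (γ t) v = 0 → fderiv ℝ ω (γ t) v = 0) :
    HasDerivAt (ω ∘ γ) 0 t := by
  have htangent : fderiv ℝ ψ (γ t) γ' = 0 :=
    (hψ.hasFDerivAt.comp_hasDerivAt t hγ).unique
      ((hasDerivAt_const t c).congr_of_eventuallyEq hlevel)
  simpa [hker γ' htangent] using hω.hasFDerivAt.comp_hasDerivAt t hγ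

theorem exists_contDiffOn_eq_comp_of_ker_le {ψ ω : ℝ × ℝ → ℝ} (hψ : ContDiff ℝ 1 ψ)
    (hω : ContDiff ℝ 1 ω) {q₀ : ℝ × ℝ} (hq₀ : fderiv ℝ ψ q₀ ≠ 0)
    (hker : ∀ᶠ q in 𝓝 q₀, ∀ v, fderiv ℝ ψ q v = 0 → fderiv ℝ ω q v = 0) :
    ∃ ρ > 0, ∃ f : ℝ → ℝ, ContDiffOn ℝ 1 f (Ioo (ψ q₀ - ρ) (ψ q₀ + ρ)) ∧
      ∀ᶠ q in 𝓝 q₀, ω q = f (ψ q) := by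
  obtain ⟨l, e, he⟩ := (fderiv ℝ ψ q₀).exists_isInvertible_prod hq₀
  set Φ : ℝ × ℝ → ℝ × ℝ := fun q => (ψ q, l q)
  have hΦ : ContDiff ℝ 1 Φ := hψ.prodMk l.contDiff
  have hΦ' : HasFDerivAt Φ (e : ℝ × ℝ →L[ℝ] ℝ × ℝ) q₀ :=
    he ▸ (hψ.differentiable one_ne_zero q₀).hasFDerivAt.prodMk l.hasFDerivAt
  set P := hΦ.contDiffAt.toOpenPartialHomeomorph Φ hΦ' one_ne_zero
  have hq₀P : q₀ ∈ P.source := hΦ.contDiffAt.mem_toOpenPartialHomeomorph_source hΦ' one_ne_zero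
  have hΨ : ContDiffAt ℝ 1 P.symm (Φ q₀) := hΦ.contDiffAt.to_localInverse hΦ' one_ne_zero
  have hΨq₀ : P.symm (Φ q₀) = q₀ := P.left_inv hq₀P
  set s₀ := l q₀
  obtain ⟨ρ, hρ, hball⟩ : ∃ ρ > 0, ∀ p ∈ Metric.ball (ψ q₀) ρ ×ˢ Metric.ball s₀ ρ,
      p ∈ P.target ∧ ContDiffAt ℝ 1 P.symm p ∧
      ∀ v, fderiv ℝ ψ (P.symm p) v = 0 → fderiv ℝ ω (P.symm p) v = 0 := by
    have hker' : ∀ᶠ p in 𝓝 (Φ q₀),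
        ∀ v, fderiv ℝ ψ (P.symm p) v = 0 → fderiv ℝ ω (P.symm p) v = 0 :=
      hΨ.continuousAt.tendsto.eventually (hΨq₀ ▸ hker)
    simp_rw [ball_prod_same]
    exact Metric.eventually_nhds_iff_ball.mp ((P.open_target.eventually_mem (P.map_source hq₀P)).and
      ((hΨ.eventually (by simp)).and hker'))
  have hfibre : ∀ x ∈ Metric.ball (ψ q₀) ρ, ∀ s ∈ Metric.ball s₀ ρ,
      HasDerivAt (fun s' => ω (P.symm (x, s'))) 0 s := by
    intro x hx s hs
    obtain ⟨htarget, hΨp, hkerp⟩ := hball (x, s) ⟨hx, hs⟩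
    have hγ : HasDerivAt (fun s' => P.symm (x, s')) (fderiv ℝ P.symm (x, s) (0, 1)) s :=
      (hΨp.differentiableAt one_ne_zero).hasFDerivAt.comp_hasDerivAt s
        ((hasDerivAt_const s x).prodMk (hasDerivAt_id s))
    refine hasDerivAt_comp_eq_zero_of_ker_le (c := x) hγ (hψ.differentiable one_ne_zero _)
      (hω.differentiable one_ne_zero _) ?_ hkerp
    have : ∀ᶠ s' in 𝓝 s, (x, s') ∈ P.target :=
      (continuous_const.prodMk continuous_id).continuousAt.preimage_mem_nhds
        (P.open_target.mem_nhds htarget)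
    exact this.mono fun s' hs' => congrArg Prod.fst (P.right_inv hs')
  set f : ℝ → ℝ := fun x => ω (P.symm (x, s₀))
  have hconst : ∀ x ∈ Metric.ball (ψ q₀) ρ, ∀ s ∈ Metric.ball s₀ ρ, ω (P.symm (x, s)) = f x :=
    fun x hx s hs => Metric.isOpen_ball.is_const_of_deriv_eq_zero (convex_ball _ _).isPreconnected
      (fun s' hs' => (hfibre x hx s' hs').differentiableAt.differentiableWithinAt)
      (fun s' hs' => (hfibre x hx s' hs').deriv) hs (Metric.mem_ball_self hρ)
  refine ⟨ρ, hρ, f, ?_, ?_⟩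
  · rw [← Real.ball_eq_Ioo]
    intro x hx
    exact (hω.contDiffAt.comp x ((hball _ ⟨hx, Metric.mem_ball_self hρ⟩).2.1.comp x
      (contDiffAt_id.prodMk contDiffAt_const))).contDiffWithinAt
  · filter_upwards [P.open_source.mem_nhds hq₀P,
      hψ.continuous.continuousAt.preimage_mem_nhds (Metric.ball_mem_nhds _ hρ),
      l.continuous.continuousAt.preimage_mem_nhds (Metric.ball_mem_nhds _ hρ)] with q hq hψq hlq
    calc ω q = ω (P.symm (Φ q)) := congrArg ω (P.left_inv hq).symm
      _ = f (ψ q) := hconst _ hψq _ hlq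

theorem StrictMonoOn.exists_Ioo_subset_image {h : ℝ → ℝ} {a b t : ℝ}
    (hmono : StrictMonoOn h (Ioo a b)) (hcont : ContinuousOn h (Ioo a b)) (ht : t ∈ Ioo a b) :
    ∃ δ₁ > 0, ∃ δ₂ > 0, Ioo (h t - δ₁) (h t + δ₂) ⊆ h '' Ioo a b := by
  obtain ⟨hat, htb⟩ := ht
  have ha' : (a + t) / 2 ∈ Ioo a b := ⟨by linarith, by linarith⟩
  have hb' : (t + b) / 2 ∈ Ioo a b := ⟨by linarith, by linarith⟩
  have hIVT : Ioo (h ((a + t) / 2)) (h ((t + b) / 2)) ⊆ h '' Ioo ((a + t) / 2) ((t + b) / 2) :=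
    intermediate_value_Ioo (by linarith) (hcont.mono (Icc_subset_Ioo ha'.1 hb'.2))
  refine ⟨h t - h ((a + t) / 2), sub_pos.mpr (hmono ha' ⟨hat, htb⟩ (by linarith)),
    h ((t + b) / 2) - h t, sub_pos.mpr (hmono ⟨hat, htb⟩ hb' (by linarith)), ?_⟩
  rw [sub_sub_cancel, add_sub_cancel]
  exact hIVT.trans (image_mono (Ioo_subset_Ioo ha'.1.le hb'.2.le))

noncomputable def planarGradient (ψ : ℝ × ℝ → ℝ) (q : ℝ × ℝ) : ℝ × ℝ :=
  (fderiv ℝ ψ q (1, 0), fderiv ℝ ψ q (0, 1))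

noncomputable def planarLaplacian (ψ : ℝ × ℝ → ℝ) (q : ℝ × ℝ) : ℝ :=
  fderiv ℝ (fun r => fderiv ℝ ψ r (1, 0)) q (1, 0) +
    fderiv ℝ (fun r => fderiv ℝ ψ r (0, 1)) q (0, 1)

theorem ContDiff.planarGradient {ψ : ℝ × ℝ → ℝ} {n : WithTop ℕ∞} (hψ : ContDiff ℝ (n + 1) ψ) :
    ContDiff ℝ n (planarGradient ψ) := by
  have h := hψ.fderiv_right le_rfl
  exact (h.clm_apply contDiff_const).prodMk (h.clm_apply contDiff_const)

theorem ContDiff.planarLaplacian {ψ : ℝ × ℝ → ℝ} {n : WithTop ℕ∞} (hψ : ContDiff ℝ (n + 2) ψ) :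
    ContDiff ℝ n (planarLaplacian ψ) := by
  have h : ContDiff ℝ (n + 1) (fderiv ℝ ψ) := hψ.fderiv_right (by rw [add_assoc]; norm_num)
  have hx : ContDiff ℝ (n + 1) fun r => fderiv ℝ ψ r (1, 0) := h.clm_apply contDiff_const
  have hy : ContDiff ℝ (n + 1) fun r => fderiv ℝ ψ r (0, 1) := h.clm_apply contDiff_const
  exact ((hx.fderiv_right le_rfl).clm_apply contDiff_const).add
    ((hy.fderiv_right le_rfl).clm_apply contDiff_const)

theorem fderiv_apply_planarGradient (ψ : ℝ × ℝ → ℝ) (q : ℝ × ℝ) :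
    fderiv ℝ ψ q (planarGradient ψ q) = fderiv ℝ ψ q (1, 0) ^ 2 + fderiv ℝ ψ q (0, 1) ^ 2 := by
  rw [ContinuousLinearMap.apply_eq_fst_mul_add_snd_mul, planarGradient]
  ring

theorem strictMonoOn_comp_of_hasDerivAt_planarGradient {ψ : ℝ × ℝ → ℝ} {σ : ℝ → ℝ × ℝ}
    {D : Set ℝ} (hD : Convex ℝ D) (hσ : ∀ t ∈ D, HasDerivAt σ (planarGradient ψ (σ t)) t)
    (hψ : ∀ t ∈ D, fderiv ℝ ψ (σ t) ≠ 0) : StrictMonoOn (ψ ∘ σ) D := by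
  have hderiv : ∀ t ∈ D,
      HasDerivAt (ψ ∘ σ) (fderiv ℝ ψ (σ t) (planarGradient ψ (σ t))) t := fun t ht =>
    (not_imp_comm.mp fderiv_zero_of_not_differentiableAt (hψ t ht)).hasFDerivAt.comp_hasDerivAt t
      (hσ t ht)
  refine strictMonoOn_of_deriv_pos hD
    (fun t ht => (hderiv t ht).continuousAt.continuousWithinAt) fun t ht => ?_
  rw [(hderiv t (interior_subset ht)).deriv, fderiv_apply_planarGradient]
  exact (fderiv ℝ ψ (σ t)).sq_add_sq_pos_of_ne_zero (hψ t (interior_subset ht))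

theorem exists_planarGradient_flow {ψ : ℝ × ℝ → ℝ} (hψ : ContDiff ℝ 2 ψ) {q₀ : ℝ × ℝ}
    {V : Set (ℝ × ℝ)} (hV : V ∈ 𝓝 q₀) :
    ∃ ε > 0, ∃ σ : ℝ → ℝ × ℝ, σ 0 = q₀ ∧
      (∀ t ∈ Ioo (-ε) ε, HasDerivAt σ (planarGradient ψ (σ t)) t) ∧ MapsTo σ (Ioo (-ε) ε) V := by
  have hgrad : ContDiffAt ℝ 1 (planarGradient ψ) q₀ := (hψ.planarGradient (n := 1)).contDiffAt
  obtain ⟨σ, hσ0, ε₀, hε₀, hσ⟩ :=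
    hgrad.exists_forall_mem_closedBall_exists_eq_forall_mem_Ioo_hasDerivAt₀ 0
  have hσV : σ ⁻¹' V ∈ 𝓝 0 :=
    (hσ 0 (by simp [hε₀])).continuousAt.preimage_mem_nhds (hσ0 ▸ hV)
  obtain ⟨ε₁, hε₁, hball⟩ := Metric.mem_nhds_iff.mp hσV
  set ε := min ε₀ ε₁
  have hIoo : ∀ r ≥ ε, Ioo (-ε) ε ⊆ Ioo (0 - r) (0 + r) := fun r hr =>
    Ioo_subset_Ioo (by linarith) (by linarith)
  refine ⟨ε, lt_min hε₀ hε₁, σ, hσ0, fun t ht => hσ t (hIoo ε₀ (min_le_left _ _) ht),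
    fun t ht => hball ?_⟩
  rw [Real.ball_eq_Ioo]
  exact hIoo ε₁ (min_le_right _ _) ht

/-- Local C¹ regularity of the vorticity function: if ψ ∈ C³, ω = Δψ, {ψ, ω} = 0 and
∇ψ(q₀) ≠ 0 with ψ(q₀) = c, there is a C¹ function f on (c-δ₁, c+δ₂) with ω = f(ψ)
near q₀; explicitly f(c') = ω(σ(g⁻¹(c'))) for the gradient flow σ of ψ through q₀
and g = ψ ∘ σ. -/
theorem stmt13 (ψ ω : ℝ × ℝ → ℝ) (hψ : ContDiff ℝ 3 ψ)
    (hω : ∀ q : ℝ × ℝ, ω q =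
      fderiv ℝ (fun r => fderiv ℝ ψ r (1, 0)) q (1, 0) +
        fderiv ℝ (fun r => fderiv ℝ ψ r (0, 1)) q (0, 1))
    (hcomm : ∀ q : ℝ × ℝ,
      -(fderiv ℝ ψ q (0, 1)) * fderiv ℝ ω q (1, 0) +
        fderiv ℝ ψ q (1, 0) * fderiv ℝ ω q (0, 1) = 0)
    (q₀ : ℝ × ℝ) (hgrad : fderiv ℝ ψ q₀ ≠ 0) (c : ℝ) (hc : ψ q₀ = c) :
    ∃ δ₁ > (0:ℝ), ∃ δ₂ > (0:ℝ), ∃ f : ℝ → ℝ,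
      ContDiffOn ℝ 1 f (Set.Ioo (c - δ₁) (c + δ₂)) ∧
      (∃ V ∈ nhds q₀, ∀ q ∈ V, ω q = f (ψ q)) ∧
      ∃ ε > (0:ℝ), ∃ σ : ℝ → ℝ × ℝ, σ 0 = q₀ ∧
        (∀ t ∈ Set.Ioo (-ε) ε,
          HasDerivAt σ (fderiv ℝ ψ (σ t) (1, 0), fderiv ℝ ψ (σ t) (0, 1)) t) ∧
        ∃ g : ℝ → ℝ, (∀ t ∈ Set.Ioo (-ε) ε, g (ψ (σ t)) = t) ∧
          ∀ c' ∈ Set.Ioo (c - δ₁) (c + δ₂), f c' = ω (σ (g c')) := by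
  subst hc
  have hωC : ContDiff ℝ 1 ω := (funext hω : ω = planarLaplacian ψ) ▸ hψ.planarLaplacian
  have hcrit : ∀ᶠ q in 𝓝 q₀, fderiv ℝ ψ q ≠ 0 :=
    (hψ.continuous_fderiv (by norm_num)).continuousAt.eventually_ne hgrad
  have hker : ∀ᶠ q in 𝓝 q₀, ∀ v, fderiv ℝ ψ q v = 0 → fderiv ℝ ω q v = 0 :=
    hcrit.mono fun q hq _ => (fderiv ℝ ψ q).apply_eq_zero_of_cross_eq_zero _ hq (hcomm q)
  obtain ⟨ρ, hρ, f, hf, hωf⟩ :=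
    exists_contDiffOn_eq_comp_of_ker_le (hψ.of_le (by norm_num)) hωC hgrad hker
  obtain ⟨ε, hε, σ, hσ0, hσ, hσV⟩ := exists_planarGradient_flow (hψ.of_le (by norm_num))
    (hωf.and (hcrit.and (hψ.continuous.continuousAt.eventually_mem
      (Ioo_mem_nhds (sub_lt_self _ hρ) (lt_add_of_pos_right _ hρ)))))
  have hmono : StrictMonoOn (ψ ∘ σ) (Ioo (-ε) ε) :=
    strictMonoOn_comp_of_hasDerivAt_planarGradient (convex_Ioo _ _) hσ fun t ht => (hσV ht).2.1
  obtain ⟨δ₁, hδ₁, δ₂, hδ₂, himage⟩ := hmono.exists_Ioo_subset_image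
    (hψ.continuous.comp_continuousOn fun t ht => (hσ t ht).continuousAt.continuousWithinAt)
    ⟨neg_lt_zero.mpr hε, hε⟩
  rw [Function.comp_apply, hσ0] at himage
  refine ⟨δ₁, hδ₁, δ₂, hδ₂, f, hf.mono ?_, ⟨_, hωf, fun q hq => hq⟩, ε, hε, σ, hσ0, hσ,
    Function.invFunOn (ψ ∘ σ) (Ioo (-ε) ε), fun t ht => hmono.injOn.leftInvOn_invFunOn ht,
    fun x hx => ?_⟩
  · rintro x hx
    obtain ⟨t, ht, rfl⟩ := himage hx
    exact (hσV ht).2.2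
  · have hx' := himage hx
    rw [(hσV (Function.invFunOn_mem hx')).1]
    exact congrArg f (Function.invFunOn_eq hx').symm
end
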